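/- Among the eight ordered triples of directed types (X,Y,Z) for which both (X,Y) and (Y,Z) belong to the six allowed pairs (→1,←1), (←1,→1), (→1,→2), (→2,←2), (←2,←1), (←2,→2), exactly six are realized by a minimal conformation of length 7 (whose three windows Γ₃,Γ₄,Γ₅ have types X,Y,Z); the two triples (→2,←2,→2) and (←2,→2,←2) are realized by no minimal conformation of length 7. -/

import Mathlib

/-- Points of the cubic lattice `ℤ³`. -/
abbrev P3 : Type := Fin 3 → ℤ

def e1 : P3 := ![1, 0, 0]
def e2 : P3 := ![0, 1, 0]
def e3 : P3 := ![0, 0, 1]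

/-- Squared Euclidean norm of an integer vector; it equals `1` iff the
Euclidean norm equals `1`. -/
def sqNorm (v : P3) : ℤ := ∑ k, (v k) ^ 2

/-- A conformation of length `N`: an injective map on `{1, …, N}` whose
consecutive steps have Euclidean length one. -/
def IsConformation (N : ℕ) (Γ : ℕ → P3) : Prop :=
  Set.InjOn Γ (Set.Icc 1 N) ∧ ∀ i, 1 ≤ i → i < N → sqNorm (Γ (i + 1) - Γ i) = 1

/-- A lattice rotation: an orthogonal integer matrix of determinant one
(equivalently, a linear isometry of `ℝ³` mapping `ℤ³` onto `ℤ³` with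
determinant one). -/
def IsLatticeRotation (R : Matrix (Fin 3) (Fin 3) ℤ) : Prop :=
  R.transpose * R = 1 ∧ R.det = 1

/-- Equivalence of length-5 conformations: `Δ' k = R (Δ k) + t` for a lattice
rotation `R` and translation `t ∈ ℤ³`. -/
def Equiv5 (Δ Δ' : Fin 5 → P3) : Prop :=
  ∃ (R : Matrix (Fin 3) (Fin 3) ℤ) (t : P3),
    IsLatticeRotation R ∧ ∀ k, Δ' k = R.mulVec (Δ k) + t

/-- Reversal of a length-5 conformation (`k ↦ Δ (6 - k)` in 1-based indexing). -/
def rev5 (Δ : Fin 5 → P3) : Fin 5 → P3 := fun k => Δ k.rev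

/-- Conformation 1: vertices (0,0,0), (1,0,0), (1,1,0), (0,1,0), (0,1,1). -/
def conf1 : Fin 5 → P3 := ![![0, 0, 0], ![1, 0, 0], ![1, 1, 0], ![0, 1, 0], ![0, 1, 1]]

/-- Conformation 2: vertices (0,0,0), (0,1,0), (−1,1,0), (−1,1,1), (−1,0,1). -/
def conf2 : Fin 5 → P3 := ![![0, 0, 0], ![0, 1, 0], ![-1, 1, 0], ![-1, 1, 1], ![-1, 0, 1]]

/-- The `i`-th window of `Γ`: the 5-tuple `(Γ(i-2), …, Γ(i+2))`. -/
def window (Γ : ℕ → P3) (i : ℕ) : Fin 5 → P3 := fun k => Γ (i - 2 + (k : ℕ))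

/-- `Φ(Δ) = 1`: the 5-tuple `Δ` or its reversal is equivalent to
conformation 1 or to conformation 2. -/
def WindowGood (Δ : Fin 5 → P3) : Prop :=
  Equiv5 Δ conf1 ∨ Equiv5 (rev5 Δ) conf1 ∨ Equiv5 Δ conf2 ∨ Equiv5 (rev5 Δ) conf2

open Classical in
/-- The function `Φ` on length-5 conformations. -/
noncomputable def Phi (Δ : Fin 5 → P3) : ℤ := if WindowGood Δ then 1 else 0

/-- The energy `E₅(Γ) = −Σ_{i=3}^{N−2} Φ(Γ_i)`. -/
noncomputable def E5 (N : ℕ) (Γ : ℕ → P3) : ℤ :=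
  -∑ i ∈ Finset.Icc 3 (N - 2), Phi (window Γ i)

/-- A minimal conformation: a conformation all of whose windows satisfy `Φ = 1`. -/
def IsMinimal (N : ℕ) (Γ : ℕ → P3) : Prop :=
  IsConformation N Γ ∧ ∀ i, 3 ≤ i → i ≤ N - 2 → WindowGood (window Γ i)

/-- The walk starting at the origin (in 1-based indexing) whose steps
cyclically repeat the given list. -/
def cyclicWalk (steps : List P3) : ℕ → P3
  | 0 => 0
  | 1 => 0
  | n + 2 => cyclicWalk steps (n + 1) + steps.getD (n % steps.length) 0

/-- The 16-term step sequence of the lattice α-helix. -/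
def alphaStepList : List P3 :=
  [e1, e2, -e1, e3, -e2, e1, e2, e3, -e1, -e2, e1, e3, e2, -e1, -e2, e3]

/-- The 4-term step sequence of the lattice β-strand. -/
def betaStepList : List P3 := [e1, e2, -e1, e3]

/-- The lattice α-helix (`H(1) = 0`, steps cyclically repeating `alphaStepList`). -/
def alphaHelix : ℕ → P3 := cyclicWalk alphaStepList

/-- The lattice β-strand (`B(1) = 0`, steps cyclically repeating `betaStepList`). -/
def betaStrand : ℕ → P3 := cyclicWalk betaStepList

/-- The four directed types of windows. -/
inductive DType : Type
  | r1  -- →1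
  | l1  -- ←1
  | r2  -- →2
  | l2  -- ←2
deriving DecidableEq

/-- A window `Δ` has directed type `→1` (resp. `→2`) if it is equivalent to
conformation 1 (resp. 2), and `←1` (resp. `←2`) if its reversal is. -/
def HasType (Δ : Fin 5 → P3) : DType → Prop
  | DType.r1 => Equiv5 Δ conf1
  | DType.l1 => Equiv5 (rev5 Δ) conf1
  | DType.r2 => Equiv5 Δ conf2
  | DType.l2 => Equiv5 (rev5 Δ) conf2

/-- The six allowed ordered pairs of directed types of consecutive windows:
(→1,←1), (←1,→1), (→1,→2), (→2,←2), (←2,←1), (←2,→2). -/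
def allowedPairs : List (DType × DType) :=
  [(DType.r1, DType.l1), (DType.l1, DType.r1), (DType.r1, DType.r2),
   (DType.r2, DType.l2), (DType.l2, DType.l1), (DType.l2, DType.r2)]

/-- `w` is the type sequence of `Γ` (a conformation of length `N`):
`w` has length `N − 4` and its `j`-th letter is the directed type of the
window `Γ_{3+j}`, `j = 0, …, N−5`. -/
def HasTypeSeq (N : ℕ) (Γ : ℕ → P3) (w : List DType) : Prop :=
  w.length = N - 4 ∧ ∀ j (h : j < w.length), HasType (window Γ (3 + j)) (w.get ⟨j, h⟩)

/-- The word `α = →1→2←2←1`. -/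
def wordAlpha : List DType := [DType.r1, DType.r2, DType.l2, DType.l1]

/-- The word `β = →1←1`. -/
def wordBeta : List DType := [DType.r1, DType.l1]

/-- `v` is a finite concatenation of copies of the words `α` and `β`. -/
def IsABConcat (v : List DType) : Prop :=
  ∃ L : List (List DType), (∀ u ∈ L, u = wordAlpha ∨ u = wordBeta) ∧ v = L.flatten

/-- A word is admissible if it is a contiguous subword (factor) of some finite
concatenation of copies of `α` and `β`. -/
def Admissible (w : List DType) : Prop := ∃ v, IsABConcat v ∧ w <:+: v

/-- The two kinds of monomers. -/
inductive AB : Type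
  | A
  | B
deriving DecidableEq

/-- The number of occurrences of the letter `c` in the `i`-th 5-tuple
`S(i−2), …, S(i+2)` of the sequence `S`. -/
def countLetter (c : AB) (S : ℕ → AB) (i : ℕ) : ℕ :=
  ((Finset.Icc (i - 2) (i + 2)).filter fun k => S k = c).card

open Classical in
/-- `Φ₁(Δ) = 1` iff `Δ` or its reversal is equivalent to conformation 1. -/
noncomputable def Phi1 (Δ : Fin 5 → P3) : ℝ :=
  if Equiv5 Δ conf1 ∨ Equiv5 (rev5 Δ) conf1 then 1 else 0

open Classical in
/-- `Φ₂(Δ) = 1` iff `Δ` or its reversal is equivalent to conformation 2. -/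
noncomputable def Phi2 (Δ : Fin 5 → P3) : ℝ :=
  if Equiv5 Δ conf2 ∨ Equiv5 (rev5 Δ) conf2 then 1 else 0

/-- The heteropolymer energy
`E₅′(S,Γ) = −Σᵢ [#_B(Sᵢ)(Φ₁(Γᵢ) + ε Φ₂(Γᵢ)) + #_A(Sᵢ)(Φ₂(Γᵢ) + ε Φ₁(Γᵢ))]`. -/
noncomputable def E5' (ε : ℝ) (S : ℕ → AB) (N : ℕ) (Γ : ℕ → P3) : ℝ :=
  -∑ i ∈ Finset.Icc 3 (N - 2),
    ((countLetter AB.B S i : ℝ) * (Phi1 (window Γ i) + ε * Phi2 (window Γ i)) +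
      (countLetter AB.A S i : ℝ) * (Phi2 (window Γ i) + ε * Phi1 (window Γ i)))


/-!
A window of type `→2` or `←2` has opposite first and last steps, `Δ 1 - Δ 0 = Δ 3 - Δ 4`: this
holds for conformation 2, is preserved by rotations and translations, and is symmetric under
reversal. Three consecutive windows with this property telescope to `Γ (j + 6) = Γ j`, so in a
conformation of length 7 they would force `Γ 7 = Γ 1`. The six remaining triples occur as three
consecutive windows of the lattice α-helix (types `→1→2←2←1→1→2`) or β-strand (`→1←1→1←1`).
-/

def EndStepsOpposite (Δ : Fin 5 → P3) : Prop := Δ 1 - Δ 0 = Δ 3 - Δ 4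

theorem endStepsOpposite_conf2 : EndStepsOpposite conf2 := by
  unfold EndStepsOpposite; decide

theorem endStepsOpposite_rev5_iff {Δ : Fin 5 → P3} :
    EndStepsOpposite (rev5 Δ) ↔ EndStepsOpposite Δ :=
  eq_comm

theorem IsLatticeRotation.mulVec_injective {R : Matrix (Fin 3) (Fin 3) ℤ}
    (hR : IsLatticeRotation R) : Function.Injective R.mulVec := fun v w h => by
  simpa [Matrix.mulVec_mulVec, hR.1] using congrArg R.transpose.mulVec h

theorem Equiv5.endStepsOpposite {Δ Δ' : Fin 5 → P3} (h : Equiv5 Δ Δ')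
    (h' : EndStepsOpposite Δ') : EndStepsOpposite Δ := by
  obtain ⟨R, t, hR, hΔ⟩ := h
  apply hR.mulVec_injective
  simpa [EndStepsOpposite, hΔ, Matrix.mulVec_sub] using h'

theorem HasType.endStepsOpposite {Δ : Fin 5 → P3} {τ : DType} (h : HasType Δ τ)
    (hτ : τ = DType.r2 ∨ τ = DType.l2) : EndStepsOpposite Δ := by
  rcases hτ with rfl | rfl
  · exact Equiv5.endStepsOpposite h endStepsOpposite_conf2
  · exact endStepsOpposite_rev5_iff.mp (Equiv5.endStepsOpposite h endStepsOpposite_conf2)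

theorem eq_of_endStepsOpposite_window {Γ : ℕ → P3} {j : ℕ}
    (h₀ : EndStepsOpposite (window Γ (j + 2))) (h₁ : EndStepsOpposite (window Γ (j + 3)))
    (h₂ : EndStepsOpposite (window Γ (j + 4))) : Γ (j + 6) = Γ j := by
  change Γ (j + 1) - Γ j = Γ (j + 3) - Γ (j + 4) at h₀
  change Γ (j + 2) - Γ (j + 1) = Γ (j + 4) - Γ (j + 5) at h₁
  change Γ (j + 3) - Γ (j + 2) = Γ (j + 5) - Γ (j + 6) at h₂
  linear_combination h₀ + h₁ + h₂

theorem WindowGood.of_hasType {Δ : Fin 5 → P3} {τ : DType} (h : HasType Δ τ) :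
    WindowGood Δ := by
  cases τ
  exacts [Or.inl h, Or.inr (Or.inl h), Or.inr (Or.inr (Or.inl h)), Or.inr (Or.inr (Or.inr h))]

theorem isConformation_of_forall_lt {N : ℕ} {Γ : ℕ → P3}
    (hinj : ∀ a < N, ∀ b < N, Γ (a + 1) = Γ (b + 1) → a = b)
    (hstep : ∀ i < N - 1, sqNorm (Γ (i + 2) - Γ (i + 1)) = 1) : IsConformation N Γ := by
  refine ⟨fun a ha b hb hab => ?_, fun i hi hiN => ?_⟩
  · obtain ⟨a, rfl⟩ := Nat.exists_eq_add_of_le' ha.1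
    obtain ⟨b, rfl⟩ := Nat.exists_eq_add_of_le' hb.1
    rw [hinj a (by grind) b (by grind) hab]
  · obtain ⟨i, rfl⟩ := Nat.exists_eq_add_of_le' hi
    exact hstep i (by omega)

theorem IsConformation.shift {N M s : ℕ} {Γ : ℕ → P3} (h : IsConformation N Γ)
    (hs : M + s ≤ N) : IsConformation M (fun n => Γ (n + s)) := by
  refine ⟨fun a ha b hb hab => ?_, fun i hi hiM => ?_⟩
  · have := h.1 (show a + s ∈ Set.Icc 1 N by grind) (show b + s ∈ Set.Icc 1 N by grind) hab
    omega
  · simpa only [Nat.add_right_comm] using h.2 (i + s) (by omega) (by omega)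

theorem window_shift {Γ : ℕ → P3} {i : ℕ} (s : ℕ) (hi : 2 ≤ i) :
    window (fun n => Γ (n + s)) i = window Γ (i + s) := by
  funext k
  simp only [window]
  congr 1
  omega

def TripleRealized (X Y Z : DType) : Prop :=
  ∃ Γ : ℕ → P3, IsMinimal 7 Γ ∧ HasType (window Γ 3) X ∧
    HasType (window Γ 4) Y ∧ HasType (window Γ 5) Z

theorem not_tripleRealized_of_type2 {X Y Z : DType} (hX : X = DType.r2 ∨ X = DType.l2)
    (hY : Y = DType.r2 ∨ Y = DType.l2) (hZ : Z = DType.r2 ∨ Z = DType.l2) :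
    ¬TripleRealized X Y Z := by
  rintro ⟨Γ, ⟨⟨hinj, -⟩, -⟩, h₃, h₄, h₅⟩
  have h71 : Γ 7 = Γ 1 := eq_of_endStepsOpposite_window (j := 1)
    (h₃.endStepsOpposite hX) (h₄.endStepsOpposite hY) (h₅.endStepsOpposite hZ)
  have := hinj (show 7 ∈ Set.Icc 1 7 by simp) (show 1 ∈ Set.Icc 1 7 by simp) h71
  omega

theorem tripleRealized_of_window {Γ : ℕ → P3} {N s : ℕ} {X Y Z : DType}
    (hΓ : IsConformation N Γ) (hN : s + 7 ≤ N) (h₃ : HasType (window Γ (s + 3)) X)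
    (h₄ : HasType (window Γ (s + 4)) Y) (h₅ : HasType (window Γ (s + 5)) Z) :
    TripleRealized X Y Z := by
  rw [Nat.add_comm, ← window_shift s (by norm_num)] at h₃
  rw [Nat.add_comm, ← window_shift s (by norm_num)] at h₄
  rw [Nat.add_comm, ← window_shift s (by norm_num)] at h₅
  refine ⟨_, ⟨hΓ.shift (by omega), fun i hi₃ hi₅ => ?_⟩, h₃, h₄, h₅⟩
  interval_cases i
  exacts [.of_hasType h₃, .of_hasType h₄, .of_hasType h₅]

theorem tripleRealized_of_hasTypeSeq {Γ : ℕ → P3} {N : ℕ} {w : List DType} {X Y Z : DType}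
    (hΓ : IsConformation N Γ) (hw : HasTypeSeq N Γ w) (hXYZ : [X, Y, Z] <:+: w) :
    TripleRealized X Y Z := by
  obtain ⟨u, v, rfl⟩ := hXYZ
  obtain ⟨hlen, htype⟩ := hw
  simp only [List.length_append, List.length_cons, List.length_nil] at hlen
  refine tripleRealized_of_window (s := u.length) hΓ (by omega) ?_ ?_ ?_
  · simpa [Nat.add_comm] using htype u.length (by simp)
  · simpa [Nat.add_comm, Nat.add_assoc] using htype (u.length + 1) (by simp)
  · simpa [Nat.add_comm, Nat.add_assoc] using htype (u.length + 2) (by simp)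

theorem isConformation_alphaHelix : IsConformation 10 alphaHelix :=
  isConformation_of_forall_lt (by decide) (by decide)

theorem isConformation_betaStrand : IsConformation 8 betaStrand :=
  isConformation_of_forall_lt (by decide) (by decide)

theorem hasTypeSeq_alphaHelix :
    HasTypeSeq 10 alphaHelix (wordAlpha ++ [DType.r1, DType.r2]) := by
  refine ⟨rfl, fun j (hj : j < 6) => ?_⟩
  interval_cases j
  exacts [⟨!![1, 0, 0; 0, 1, 0; 0, 0, 1], ![0, 0, 0], ⟨by decide, by decide⟩, by decide⟩,
    ⟨!![1, 0, 0; 0, 1, 0; 0, 0, 1], ![-1, 0, 0], ⟨by decide, by decide⟩, by decide⟩,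
    ⟨!![0, -1, 0; -1, 0, 0; 0, 0, -1], ![0, 1, 1], ⟨by decide, by decide⟩, by decide⟩,
    ⟨!![0, -1, 0; -1, 0, 0; 0, 0, -1], ![1, 1, 1], ⟨by decide, by decide⟩, by decide⟩,
    ⟨!![0, -1, 0; 1, 0, 0; 0, 0, 1], ![1, 0, -1], ⟨by decide, by decide⟩, by decide⟩,
    ⟨!![0, -1, 0; 1, 0, 0; 0, 0, 1], ![0, 0, -1], ⟨by decide, by decide⟩, by decide⟩]

theorem hasTypeSeq_betaStrand : HasTypeSeq 8 betaStrand (wordBeta ++ wordBeta) := by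
  refine ⟨rfl, fun j (hj : j < 4) => ?_⟩
  interval_cases j
  exacts [⟨!![1, 0, 0; 0, 1, 0; 0, 0, 1], ![0, 0, 0], ⟨by decide, by decide⟩, by decide⟩,
    ⟨!![-1, 0, 0; 0, 0, -1; 0, -1, 0], ![1, 1, 1], ⟨by decide, by decide⟩, by decide⟩,
    ⟨!![-1, 0, 0; 0, 0, 1; 0, 1, 0], ![1, 0, -1], ⟨by decide, by decide⟩, by decide⟩,
    ⟨!![1, 0, 0; 0, -1, 0; 0, 0, -1], ![0, 2, 1], ⟨by decide, by decide⟩, by decide⟩]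

/-- among the ordered triples `(X,Y,Z)` with `(X,Y)` and `(Y,Z)`
allowed, exactly those different from (→2,←2,→2) and (←2,→2,←2) are realized
as the types of the three windows of a minimal conformation of length 7. -/
theorem triples_realized (X Y Z : DType)
    (hXY : (X, Y) ∈ allowedPairs) (hYZ : (Y, Z) ∈ allowedPairs) :
    (∃ Γ : ℕ → P3, IsMinimal 7 Γ ∧ HasType (window Γ 3) X ∧
        HasType (window Γ 4) Y ∧ HasType (window Γ 5) Z) ↔
      ¬((X, Y, Z) = (DType.r2, DType.l2, DType.r2) ∨
        (X, Y, Z) = (DType.l2, DType.r2, DType.l2)) := by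
  change TripleRealized X Y Z ↔ _
  simp only [allowedPairs, List.mem_cons, List.not_mem_nil, or_false, Prod.mk.injEq] at hXY hYZ
  rcases hXY with ⟨rfl, rfl⟩ | ⟨rfl, rfl⟩ | ⟨rfl, rfl⟩ | ⟨rfl, rfl⟩ | ⟨rfl, rfl⟩ | ⟨rfl, rfl⟩ <;>
    rcases hYZ with ⟨h, rfl⟩ | ⟨h, rfl⟩ | ⟨h, rfl⟩ | ⟨h, rfl⟩ | ⟨h, rfl⟩ | ⟨h, rfl⟩ <;>
    first
      | exact absurd h (by decide)
      | exact iff_of_false (not_tripleRealized_of_type2 (by decide) (by decide) (by decide))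
          (by decide)
      | exact iff_of_true (tripleRealized_of_hasTypeSeq isConformation_alphaHelix
          hasTypeSeq_alphaHelix (by decide)) (by decide)
      | exact iff_of_true (tripleRealized_of_hasTypeSeq isConformation_betaStrand
          hasTypeSeq_betaStrand (by decide)) (by decide)
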